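/- arXiv:1411.7819 — 2 statements merged into one kernel-verified Lean document; each statement's English description precedes it below -/
import Mathlib

section
/- Let M = [0,1]² with the Euclidean metric, let k ≥ 2 be an integer with 3^{1/4}·√k > √2, let q_1, …, q_k be a farthest-point-insertion sequence in M with S_k = {q_1, …, q_k}, and let P ⊆ M be any k-point subset with gap ratio α = GR_P. Then GR_{S_k} ≤ ρ(k)·α, where ρ(k) = 27^{1/4}·√k / (3^{1/4}·√k − √2). -/
open Metric

/-- Minimum gap of a point set `P`: half the least pairwise distance. -/
noncomputable def minGap {E : Type*} [MetricSpace E] (P : Set E) : ℝ :=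
  sInf {d : ℝ | ∃ p ∈ P, ∃ q ∈ P, p ≠ q ∧ d = dist p q} / 2

/-- Maximum gap of `P` over the space `X`: the covering radius of `P` in `X`. -/
noncomputable def maxGap {E : Type*} [MetricSpace E] (X P : Set E) : ℝ :=
  sSup ((fun q => Metric.infDist q P) '' X)

/-- Gap ratio of `P` over the space `X`. -/
noncomputable def gapRatio {E : Type*} [MetricSpace E] (X P : Set E) : ℝ :=
  maxGap X P / minGap P

/-- The unit square in the Euclidean plane. -/
def unitSquare : Set (EuclideanSpace ℝ (Fin 2)) :=
  {x | ∀ i, x i ∈ Set.Icc (0:ℝ) 1}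

/-- The first `i` points of the sequence `q`. -/
def fpiPrefix {E : Type*} (q : ℕ → E) (i : ℕ) : Set E := q '' {j | j < i}

/-- `q` is a farthest-point-insertion sequence of length `k` in the space `X`:
`q 0` and `q 1` realize the diameter of `X`, and each subsequent point is a
point of `X` farthest from the already chosen points. -/
def IsFPIOn {E : Type*} [MetricSpace E] (X : Set E) (k : ℕ) (q : ℕ → E) : Prop :=
  (∀ i < k, q i ∈ X) ∧
  dist (q 0) (q 1) = Metric.diam X ∧
  ∀ i, 2 ≤ i → i < k →
    Metric.infDist (q i) (fpiPrefix q i) = maxGap X (fpiPrefix q i)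

/-!
Farthest-point insertion has gap ratio at most `2` in any bounded space. Each point `q j` with
`j ≥ 2` is at distance exactly `maxGap X (fpiPrefix q j)` from the earlier points, covering radii
only decrease as points are added, and `dist (q 0) (q 1) = diam X` bounds every covering radius.
Hence the final covering radius is at most every pairwise distance, i.e. at most `2 · minGap`.

Conversely, every finite `P` in the unit square with a closest pair `p, q`, `d = dist p q`, has
gap ratio at least `2/√3`. The centre `z = m ± (q - p)^⊥ / (2√3)` of one of the two equilateral
triangles on `pq` (`m` the midpoint) lies in the square: the coordinate shifted by the smaller
component of `q - p` stays between those of `p` and `q`, and the sign is chosen to move the other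
coordinate towards `1/2`. Now `dist z p = dist z q = d/√3`, and for any other `s ∈ P` Apollonius
gives `dist s m ≥ (√3/2) d`, so `dist s z ≥ (√3/2) d - d/(2√3) = d/√3`.

Since `ρ(k) = √3 · 3^{1/4}√k / (3^{1/4}√k - √2) ≥ √3`, we get `2 = √3 · (2/√3) ≤ ρ(k) · GR_P`.
-/

open Bornology Set RealInnerProductSpace

section GapRatio

variable {E : Type*} [MetricSpace E] {X P S : Set E}

lemma infDist_le_maxGap (hX : IsBounded X) (hP : P.Nonempty) {z : E} (hz : z ∈ X) :
    infDist z P ≤ maxGap X P := by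
  obtain ⟨p, hp⟩ := hP
  obtain ⟨R, hR⟩ := (isBounded_iff_subset_closedBall p).1 hX
  refine le_csSup ⟨R, ?_⟩ (mem_image_of_mem _ hz)
  rintro _ ⟨x, hx, rfl⟩
  exact (infDist_le_dist_of_mem hp).trans (hR hx)

lemma maxGap_le {c : ℝ} (hX : X.Nonempty) (h : ∀ z ∈ X, infDist z P ≤ c) : maxGap X P ≤ c :=
  csSup_le (hX.image _) (by rintro _ ⟨z, hz, rfl⟩; exact h z hz)

lemma maxGap_anti (hX : IsBounded X) (hX' : X.Nonempty) (hSP : S ⊆ P) (hS : S.Nonempty) :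
    maxGap X P ≤ maxGap X S :=
  maxGap_le hX' fun _ hz =>
    (infDist_le_infDist_of_subset hSP hS).trans (infDist_le_maxGap hX hS hz)

lemma maxGap_le_diam (hX : IsBounded X) {p : E} (hp : p ∈ P) (hpX : p ∈ X) :
    maxGap X P ≤ diam X :=
  maxGap_le ⟨p, hpX⟩ fun _ hz =>
    (infDist_le_dist_of_mem hp).trans (dist_le_diam_of_mem hX hz hpX)

lemma minGap_nonneg (P : Set E) : 0 ≤ minGap P :=
  div_nonneg (Real.sInf_nonneg (by rintro _ ⟨_, -, _, -, -, rfl⟩; exact dist_nonneg)) zero_le_two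

lemma two_mul_minGap (P : Set E) :
    2 * minGap P = sInf {d : ℝ | ∃ p ∈ P, ∃ q ∈ P, p ≠ q ∧ d = dist p q} := by
  rw [minGap]; ring

lemma two_mul_minGap_le_dist {p q : E} (hp : p ∈ P) (hq : q ∈ P) (hpq : p ≠ q) :
    2 * minGap P ≤ dist p q := by
  rw [two_mul_minGap]
  exact csInf_le ⟨0, by rintro _ ⟨a, -, b, -, -, rfl⟩; exact dist_nonneg⟩ ⟨p, hp, q, hq, hpq, rfl⟩

lemma exists_dist_eq_two_mul_minGap (hP : P.Finite) {p q : E} (hp : p ∈ P) (hq : q ∈ P)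
    (hpq : p ≠ q) : ∃ a ∈ P, ∃ b ∈ P, a ≠ b ∧ dist a b = 2 * minGap P := by
  set D := {d : ℝ | ∃ p ∈ P, ∃ q ∈ P, p ≠ q ∧ d = dist p q}
  have hD : D.Finite := ((hP.prod hP).image fun x : E × E => dist x.1 x.2).subset <| by
    rintro _ ⟨a, ha, b, hb, -, rfl⟩
    exact ⟨(a, b), ⟨ha, hb⟩, rfl⟩
  obtain ⟨a, ha, b, hb, hab, hd⟩ := (show D.Nonempty from ⟨_, p, hp, q, hq, hpq, rfl⟩).csInf_mem hD
  exact ⟨a, ha, b, hb, hab, by rw [two_mul_minGap, hd]⟩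

lemma gapRatio_le_two (h : ∀ p ∈ P, ∀ q ∈ P, p ≠ q → maxGap X P ≤ dist p q) :
    gapRatio X P ≤ 2 := by
  set D := {d : ℝ | ∃ p ∈ P, ∃ q ∈ P, p ≠ q ∧ d = dist p q}
  rcases D.eq_empty_or_nonempty with hD | hD
  -- no two distinct points: `minGap P = sInf ∅ / 2 = 0`, and the ratio is `_ / 0 = 0`
  · simp [gapRatio, minGap, D, hD]
  refine div_le_of_le_mul₀ ?_ zero_le_two ?_
  · exact minGap_nonneg P
  rw [two_mul_minGap]
  exact le_csInf hD (by rintro _ ⟨p, hp, q, hq, hpq, rfl⟩; exact h p hp q hq hpq)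

end GapRatio

lemma fpiPrefix_mono {E : Type*} (q : ℕ → E) {i j : ℕ} (h : i ≤ j) :
    fpiPrefix q i ⊆ fpiPrefix q j :=
  image_mono fun _ hx => lt_of_lt_of_le hx h

namespace IsFPIOn

variable {E : Type*} [MetricSpace E] {X : Set E} {k : ℕ} {q : ℕ → E}

lemma maxGap_le_dist (hX : IsBounded X) (hq : IsFPIOn X k q) {i j : ℕ} (hij : i < j)
    (hjk : j < k) : maxGap X (fpiPrefix q k) ≤ dist (q i) (q j) := by
  have hq₀ : q 0 ∈ X := hq.1 0 (by omega)
  have hi : q i ∈ fpiPrefix q j := ⟨i, hij, rfl⟩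
  rcases lt_or_ge j 2 with hj | hj
  · obtain rfl : i = 0 := by omega
    obtain rfl : j = 1 := by omega
    rw [hq.2.1]
    exact maxGap_le_diam hX ⟨0, show 0 < k by omega, rfl⟩ hq₀
  calc maxGap X (fpiPrefix q k)
      ≤ maxGap X (fpiPrefix q j) := maxGap_anti hX ⟨_, hq₀⟩ (fpiPrefix_mono q hjk.le) ⟨_, hi⟩
    _ = infDist (q j) (fpiPrefix q j) := (hq.2.2 j hj hjk).symm
    _ ≤ dist (q j) (q i) := infDist_le_dist_of_mem hi
    _ = dist (q i) (q j) := dist_comm _ _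

lemma gapRatio_le_two (hX : IsBounded X) (hq : IsFPIOn X k q) :
    gapRatio X (fpiPrefix q k) ≤ 2 := by
  refine _root_.gapRatio_le_two ?_
  rintro _ ⟨i, hi, rfl⟩ _ ⟨j, hj, rfl⟩ hij
  rcases lt_trichotomy i j with h | rfl | h
  · exact hq.maxGap_le_dist hX h hj
  · exact absurd rfl hij
  · rw [dist_comm]
    exact hq.maxGap_le_dist hX h hi

end IsFPIOn

section Apex

variable {V : Type*} [NormedAddCommGroup V] [InnerProductSpace ℝ V]

lemma sqrt_three_div_two_mul_le_dist_midpoint {p q s : V} (hp : dist p q ≤ dist s p)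
    (hq : dist p q ≤ dist s q) : √3 / 2 * dist p q ≤ dist s (midpoint ℝ p q) := by
  have apollonius :=
    EuclideanGeometry.dist_sq_add_dist_sq_eq_two_mul_dist_midpoint_sq_add_half_dist_sq s p q
  have hp2 := pow_le_pow_left₀ dist_nonneg hp 2
  have hq2 := pow_le_pow_left₀ dist_nonneg hq 2
  refine le_of_pow_le_pow_left₀ two_ne_zero dist_nonneg ?_
  rw [mul_pow, div_pow, Real.sq_sqrt zero_le_three]
  linarith

lemma dist_midpoint_add_left_sq {p q w : V} (hw : ⟪q - p, w⟫ = 0) :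
    dist (midpoint ℝ p q + w) p ^ 2 = (dist p q / 2) ^ 2 + ‖w‖ ^ 2 := by
  rw [dist_eq_norm, add_sub_right_comm, midpoint_sub_left, norm_add_sq_real, real_inner_smul_left,
    hw, mul_zero, mul_zero, add_zero, norm_smul, invOf_eq_inv, norm_inv, Real.norm_ofNat,
    dist_comm, dist_eq_norm]
  ring

lemma dist_midpoint_add_right_sq {p q w : V} (hw : ⟪q - p, w⟫ = 0) :
    dist (midpoint ℝ p q + w) q ^ 2 = (dist p q / 2) ^ 2 + ‖w‖ ^ 2 := by
  rw [midpoint_comm, dist_comm p, dist_midpoint_add_left_sq]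
  rw [← neg_sub, inner_neg_left, hw, neg_zero]

lemma div_sqrt_three_le_dist_midpoint_add {P : Set V} {p q : V} (hp : p ∈ P) (hq : q ∈ P)
    (hmin : ∀ a ∈ P, ∀ b ∈ P, a ≠ b → dist p q ≤ dist a b) {w : V} (hw : ⟪q - p, w⟫ = 0)
    (hw' : ‖w‖ = dist p q / (2 * √3)) {s : V} (hs : s ∈ P) :
    dist p q / √3 ≤ dist (midpoint ℝ p q + w) s := by
  have h3 : √3 ^ 2 = 3 := Real.sq_sqrt zero_le_three
  have h3₀ : 0 < √3 := by positivity
  have of_sq : ∀ x : V, dist (midpoint ℝ p q + w) x ^ 2 = (dist p q / 2) ^ 2 + ‖w‖ ^ 2 →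
      dist p q / √3 ≤ dist (midpoint ℝ p q + w) x := fun x hx => by
    refine le_of_pow_le_pow_left₀ two_ne_zero dist_nonneg (le_of_eq ?_)
    rw [hx, hw']
    field_simp
    rw [h3]
    ring
  rcases eq_or_ne s p with rfl | hsp
  · exact of_sq s (dist_midpoint_add_left_sq hw)
  rcases eq_or_ne s q with rfl | hsq
  · exact of_sq s (dist_midpoint_add_right_sq hw)
  have hmid := sqrt_three_div_two_mul_le_dist_midpoint (hmin s hs p hp hsp) (hmin s hs q hq hsq)
  have htri := dist_triangle s (midpoint ℝ p q + w) (midpoint ℝ p q)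
  rw [dist_self_add_left, hw', dist_comm s (midpoint ℝ p q + w)] at htri
  calc dist p q / √3 = √3 / 2 * dist p q - dist p q / (2 * √3) := by
        field_simp
        rw [h3]
        ring
    _ ≤ dist (midpoint ℝ p q + w) s := by linarith

end Apex

lemma midpoint_add_mem_Icc {x y t a b : ℝ} (hx : x ∈ Icc a b) (hy : y ∈ Icc a b)
    (ht : |t| ≤ |y - x| / 2) : (x + y) / 2 + t ∈ Icc a b := by
  obtain ⟨hx₁, hx₂⟩ := hx
  obtain ⟨hy₁, hy₂⟩ := hy
  obtain ⟨ht₁, ht₂⟩ := abs_le.1 ht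
  constructor <;> cases abs_cases (y - x) <;> linarith

lemma add_mem_Icc_or_sub_mem_Icc {a t : ℝ} (ha : a ∈ Icc (0 : ℝ) 1) (ht : |t| ≤ 1 / 2) :
    a + t ∈ Icc (0 : ℝ) 1 ∨ a - t ∈ Icc (0 : ℝ) 1 := by
  obtain ⟨ha₁, ha₂⟩ := ha
  obtain ⟨ht₁, ht₂⟩ := abs_le.1 ht
  simp only [mem_Icc]
  rcases le_total 0 t with h | h <;> rcases le_total a (1 / 2) with h' | h'
  all_goals first
    | exact Or.inl ⟨by linarith, by linarith⟩
    | exact Or.inr ⟨by linarith, by linarith⟩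

section SquareShift

variable {x₀ x₁ y₀ y₁ c : ℝ}

/- With `p = (x₀, x₁)`, `q = (y₀, y₁)`: as `|y₁ - x₁| ≤ |y₀ - x₀|`, the first coordinate of
`m - σ c (q - p)^⊥` stays between `x₀` and `y₀` for either sign `σ`, so only the second
coordinate constrains `σ`. -/
lemma exists_sign_mem_Icc_of_abs_le (hc₀ : 0 ≤ c) (hc : c ≤ 1 / 2)
    (h : |y₁ - x₁| ≤ |y₀ - x₀|) (hx₀ : x₀ ∈ Icc (0 : ℝ) 1) (hy₀ : y₀ ∈ Icc (0 : ℝ) 1)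
    (hx₁ : x₁ ∈ Icc (0 : ℝ) 1) (hy₁ : y₁ ∈ Icc (0 : ℝ) 1) :
    ∃ σ : ℝ, |σ| = 1 ∧ (x₀ + y₀) / 2 - σ * c * (y₁ - x₁) ∈ Icc (0 : ℝ) 1 ∧
      (x₁ + y₁) / 2 + σ * c * (y₀ - x₀) ∈ Icc (0 : ℝ) 1 := by
  have hm₁ : (x₁ + y₁) / 2 ∈ Icc (0 : ℝ) 1 :=
    ⟨by linarith [hx₁.1, hy₁.1], by linarith [hx₁.2, hy₁.2]⟩
  have hshift : |c * (y₀ - x₀)| ≤ 1 / 2 := by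
    have : |y₀ - x₀| ≤ 1 :=
      abs_sub_le_iff.2 ⟨by linarith [hy₀.2, hx₀.1], by linarith [hx₀.2, hy₀.1]⟩
    rw [abs_mul, abs_of_nonneg hc₀]
    nlinarith [abs_nonneg (y₀ - x₀)]
  have first : ∀ σ : ℝ, |σ| = 1 → (x₀ + y₀) / 2 - σ * c * (y₁ - x₁) ∈ Icc (0 : ℝ) 1 :=
    fun σ hσ => by
      rw [sub_eq_add_neg]
      refine midpoint_add_mem_Icc hx₀ hy₀ ?_
      rw [abs_neg, abs_mul, abs_mul, hσ, one_mul, abs_of_nonneg hc₀]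
      nlinarith [abs_nonneg (y₁ - x₁)]
  rcases add_mem_Icc_or_sub_mem_Icc hm₁ hshift with h | h
  · exact ⟨1, abs_one, first 1 abs_one, by rwa [one_mul]⟩
  · refine ⟨-1, by simp, first (-1) (by simp), ?_⟩
    rwa [neg_one_mul, neg_mul, ← sub_eq_add_neg]

lemma exists_sign_mem_Icc (hc₀ : 0 ≤ c) (hc : c ≤ 1 / 2)
    (hx₀ : x₀ ∈ Icc (0 : ℝ) 1) (hy₀ : y₀ ∈ Icc (0 : ℝ) 1)
    (hx₁ : x₁ ∈ Icc (0 : ℝ) 1) (hy₁ : y₁ ∈ Icc (0 : ℝ) 1) :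
    ∃ σ : ℝ, |σ| = 1 ∧ (x₀ + y₀) / 2 - σ * c * (y₁ - x₁) ∈ Icc (0 : ℝ) 1 ∧
      (x₁ + y₁) / 2 + σ * c * (y₀ - x₀) ∈ Icc (0 : ℝ) 1 := by
  rcases le_total |y₁ - x₁| |y₀ - x₀| with h | h
  · exact exists_sign_mem_Icc_of_abs_le hc₀ hc h hx₀ hy₀ hx₁ hy₁
  · obtain ⟨σ, hσ, h₁, h₀⟩ := exists_sign_mem_Icc_of_abs_le hc₀ hc h hx₁ hy₁ hx₀ hy₀
    refine ⟨-σ, by rwa [abs_neg], ?_, ?_⟩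
    · rwa [neg_mul, neg_mul, sub_neg_eq_add]
    · rwa [neg_mul, neg_mul, ← sub_eq_add_neg]

end SquareShift

lemma isBounded_unitSquare : IsBounded unitSquare := by
  refine isBounded_iff_forall_norm_le.2 ⟨2, fun x hx => ?_⟩
  obtain ⟨⟨h₀, h₀'⟩, ⟨h₁, h₁'⟩⟩ := And.intro (hx 0) (hx 1)
  rw [EuclideanSpace.norm_eq, Fin.sum_univ_two, Real.sqrt_le_left zero_le_two, Real.norm_eq_abs,
    Real.norm_eq_abs, sq_abs, sq_abs]
  nlinarith

lemma exists_perp_midpoint_add_mem_unitSquare {p q : EuclideanSpace ℝ (Fin 2)}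
    (hp : p ∈ unitSquare) (hq : q ∈ unitSquare) {c : ℝ} (hc₀ : 0 ≤ c) (hc : c ≤ 1 / 2) :
    ∃ w : EuclideanSpace ℝ (Fin 2),
      ⟪q - p, w⟫ = 0 ∧ ‖w‖ = c * dist p q ∧ midpoint ℝ p q + w ∈ unitSquare := by
  have hmid : ∀ i, (midpoint ℝ p q) i = (p i + q i) / 2 := fun i => by
    simp only [midpoint_eq_smul_add, invOf_eq_inv, smul_add, PiLp.add_apply, PiLp.smul_apply,
      smul_eq_mul]
    ring
  obtain ⟨σ, hσ, h₀, h₁⟩ := exists_sign_mem_Icc hc₀ hc (hp 0) (hq 0) (hp 1) (hq 1)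
  refine ⟨(σ * c) • !₂[-(q - p) 1, (q - p) 0], ?_, ?_, ?_⟩
  · simp only [PiLp.inner_apply, PiLp.sub_apply, PiLp.smul_apply, smul_eq_mul,
      RCLike.inner_apply, conj_trivial, Fin.sum_univ_two, Matrix.cons_val_zero,
      Matrix.cons_val_one, Matrix.cons_val_fin_one]
    ring
  · rw [norm_smul, Real.norm_eq_abs, abs_mul, hσ, one_mul, abs_of_nonneg hc₀,
      EuclideanSpace.norm_eq, EuclideanSpace.dist_eq, Fin.sum_univ_two, Fin.sum_univ_two]
    congr 1
    simp only [Matrix.cons_val_zero, Matrix.cons_val_one, PiLp.sub_apply, Real.norm_eq_abs,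
      Real.dist_eq, sq_abs]
    ring_nf
  · refine Fin.forall_fin_two.2 ⟨?_, ?_⟩
    all_goals
      simp only [PiLp.add_apply, PiLp.smul_apply, PiLp.sub_apply, hmid, smul_eq_mul,
        Matrix.cons_val_zero, Matrix.cons_val_one, Matrix.cons_val_fin_one]
    · simpa only [mul_neg, sub_eq_add_neg] using h₀
    · exact h₁

lemma twentySeven_rpow_quarter : (27 : ℝ) ^ ((1 : ℝ) / 4) = √3 * 3 ^ ((1 : ℝ) / 4) := by
  rw [Real.sqrt_eq_rpow, ← Real.rpow_add zero_lt_three,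
    show (27 : ℝ) = 3 ^ (3 : ℕ) by norm_num, ← Real.rpow_natCast_mul zero_le_three]
  norm_num

lemma two_div_sqrt_three_le_gapRatio {P : Set (EuclideanSpace ℝ (Fin 2))} (hPs : P ⊆ unitSquare)
    (hP : P.Finite) {p q : EuclideanSpace ℝ (Fin 2)} (hp : p ∈ P) (hq : q ∈ P) (hpq : p ≠ q) :
    2 / √3 ≤ gapRatio unitSquare P := by
  obtain ⟨a, ha, b, hb, hab, hd⟩ := exists_dist_eq_two_mul_minGap hP hp hq hpq
  have hr : 0 < minGap P := by linarith [dist_pos.2 hab]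
  have h3 : 1 ≤ √3 := Real.one_le_sqrt.2 (by norm_num)
  obtain ⟨w, hw, hw', hz⟩ := exists_perp_midpoint_add_mem_unitSquare (hPs ha) (hPs hb)
    (c := 1 / (2 * √3)) (by positivity) (one_div_le_one_div_of_le two_pos (by linarith))
  have hfar : dist a b / √3 ≤ infDist (midpoint ℝ a b + w) P :=
    (le_infDist ⟨a, ha⟩).2 fun s hs => div_sqrt_three_le_dist_midpoint_add ha hb
      (fun x hx y hy hxy => hd ▸ two_mul_minGap_le_dist hx hy hxy) hw (by rw [hw']; ring) hs
  rw [gapRatio, le_div_iff₀ hr]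
  calc 2 / √3 * minGap P = dist a b / √3 := by rw [hd]; ring
    _ ≤ maxGap unitSquare P := hfar.trans (infDist_le_maxGap isBounded_unitSquare ⟨a, ha⟩ hz)

/-- In the unit square, farthest-point insertion is a `ρ(k)`-approximation for the
optimal gap ratio, where `ρ(k) = 27^{1/4}·√k / (3^{1/4}·√k − √2)`. -/
theorem stmt10 (k : ℕ) (hk : 2 ≤ k)
    (hk2 : Real.sqrt 2 < (3:ℝ) ^ ((1:ℝ)/4) * Real.sqrt k)
    (q : ℕ → EuclideanSpace ℝ (Fin 2)) (hq : IsFPIOn unitSquare k q)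
    (P : Set (EuclideanSpace ℝ (Fin 2))) (hPsub : P ⊆ unitSquare)
    (hP : P.ncard = k) :
    gapRatio unitSquare (fpiPrefix q k) ≤
      ((27:ℝ) ^ ((1:ℝ)/4) * Real.sqrt k /
        ((3:ℝ) ^ ((1:ℝ)/4) * Real.sqrt k - Real.sqrt 2)) *
        gapRatio unitSquare P := by
  have hPfin : P.Finite := Set.finite_of_ncard_pos (by omega)
  obtain ⟨a, b, ha, hb, hab⟩ := (Set.one_lt_ncard_iff hPfin).1 (by omega)
  have hρ : √3 ≤ (27 : ℝ) ^ ((1 : ℝ) / 4) * √k / ((3 : ℝ) ^ ((1 : ℝ) / 4) * √k - √2) := by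
    rw [twentySeven_rpow_quarter, mul_assoc, le_div_iff₀ (sub_pos.2 hk2)]
    exact mul_le_mul_of_nonneg_left (sub_le_self _ (Real.sqrt_nonneg 2)) (Real.sqrt_nonneg 3)
  calc gapRatio unitSquare (fpiPrefix q k) ≤ 2 := hq.gapRatio_le_two isBounded_unitSquare
    _ = √3 * (2 / √3) := by field_simp
    _ ≤ _ := mul_le_mul hρ (two_div_sqrt_three_le_gapRatio hPsub hPfin ha hb hab) (by positivity)
      ((Real.sqrt_nonneg 3).trans hρ)
end

section
/- Let M be a finite set of at least k + 1 points in ℝ^d (k ≥ 2) with the Euclidean metric. Let α = min over all k-point subsets of M of the gap ratio (with maximum gap taken over M), and assume α ≤ 2. Let 0 < ε < 1/2 and ε₁ = ε/(3 + 2ε). Suppose P* = {p_1, …, p_k} ⊆ M attains gap ratio α with minimum gap r, and suppose Q = {q_1, …, q_k} ⊆ M satisfies ‖q_i − p_i‖ ≤ ε₁·α·r for each i. Then the points q_1, …, q_k are pairwise distinct and the gap ratio of Q over M satisfies GR_Q ≤ (1 + ε)·α. -/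
open Metric

/-!
Moving each point of `P* = {p_i}` by at most `δ = ε₁ α r` shrinks the minimum gap by at most `δ`
(triangle inequality on pairs) and grows the maximum gap by at most `δ` (every point of `M` that
was within `R = α r` of some `p_i` is within `R + δ` of `q_i`). Since `δ < r`, the `q_i` stay
distinct and `GR_Q ≤ (α r + δ) / (r - δ)`, which is at most `(1 + ε) α` exactly because
`ε₁ (1 + 2 (1 + ε)) = ε` and `α ≤ 2`.
-/

lemma range_nontrivial_of_injective {ι α : Type*} [Nontrivial ι] {f : ι → α} (hf : f.Injective) :
    (Set.range f).Nontrivial :=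
  let ⟨i, j, hij⟩ := exists_pair_ne ι
  ⟨f i, ⟨i, rfl⟩, f j, ⟨j, rfl⟩, hf.ne hij⟩

section GapBounds

variable {E : Type*} [MetricSpace E]

def pairwiseDists (P : Set E) : Set ℝ :=
  {d : ℝ | ∃ a ∈ P, ∃ b ∈ P, a ≠ b ∧ d = dist a b}

lemma minGap_eq (P : Set E) : minGap P = sInf (pairwiseDists P) / 2 := rfl

lemma finite_pairwiseDists {P : Set E} (hP : P.Finite) : (pairwiseDists P).Finite := by
  refine ((hP.prod hP).image fun x : E × E => dist x.1 x.2).subset ?_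
  rintro d ⟨a, ha, b, hb, -, rfl⟩
  exact ⟨(a, b), ⟨ha, hb⟩, rfl⟩

lemma two_mul_minGap_le_dist_s12 {P : Set E} (hP : P.Finite) {a b : E} (ha : a ∈ P) (hb : b ∈ P)
    (hab : a ≠ b) : 2 * minGap P ≤ dist a b := by
  have := csInf_le (finite_pairwiseDists hP).bddBelow ⟨a, ha, b, hb, hab, rfl⟩
  rw [minGap_eq]
  linarith

lemma le_minGap {P : Set E} (hP : P.Nontrivial) {c : ℝ}
    (h : ∀ a ∈ P, ∀ b ∈ P, a ≠ b → 2 * c ≤ dist a b) : c ≤ minGap P := by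
  obtain ⟨a, ha, b, hb, hab⟩ := hP
  have : 2 * c ≤ sInf (pairwiseDists P) := by
    refine le_csInf ⟨_, a, ha, b, hb, hab, rfl⟩ ?_
    rintro d ⟨a, ha, b, hb, hab, rfl⟩
    exact h a ha b hb hab
  rw [minGap_eq]
  linarith

lemma minGap_pos {P : Set E} (hP : P.Finite) (hP' : P.Nontrivial) : 0 < minGap P := by
  obtain ⟨a, ha, b, hb, hab⟩ := hP'
  obtain ⟨a, -, b, -, hab, hd⟩ : sInf (pairwiseDists P) ∈ pairwiseDists P :=
    Set.Nonempty.csInf_mem ⟨_, a, ha, b, hb, hab, rfl⟩ (finite_pairwiseDists hP)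
  have : 0 < dist a b := dist_pos.mpr hab
  rw [minGap_eq, hd]
  positivity

lemma maxGap_nonneg (X P : Set E) : 0 ≤ maxGap X P :=
  Real.sSup_nonneg <| by
    rintro _ ⟨x, -, rfl⟩
    exact infDist_nonneg

lemma infDist_le_maxGap_s12 {X : Set E} (hX : X.Finite) (P : Set E) {x : E} (hx : x ∈ X) :
    infDist x P ≤ maxGap X P :=
  le_csSup (hX.image _).bddAbove ⟨x, hx, rfl⟩

end GapBounds

section Perturbation

variable {E ι : Type*} [MetricSpace E] {p q : ι → E} {δ : ℝ}

lemma dist_sub_two_mul_le_dist (h : ∀ i, dist (q i) (p i) ≤ δ) (i j : ι) :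
    dist (p i) (p j) - 2 * δ ≤ dist (q i) (q j) := by
  have := dist_triangle4 (p i) (q i) (q j) (p j)
  rw [dist_comm (p i) (q i)] at this
  linarith [h i, h j]

lemma infDist_range_le_add [Nonempty ι] (h : ∀ i, dist (q i) (p i) ≤ δ) (x : E) :
    infDist x (Set.range q) ≤ infDist x (Set.range p) + δ := by
  suffices infDist x (Set.range q) - δ ≤ infDist x (Set.range p) by linarith
  refine (le_infDist (Set.range_nonempty p)).mpr ?_
  rintro _ ⟨i, rfl⟩
  have := infDist_le_dist_of_mem (x := x) (Set.mem_range_self (f := q) i)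
  have := dist_triangle x (p i) (q i)
  rw [dist_comm (p i) (q i)] at this
  linarith [h i]

lemma maxGap_range_le_add [Nonempty ι] {X : Set E} (hX : X.Finite)
    (h : ∀ i, dist (q i) (p i) ≤ δ) :
    maxGap X (Set.range q) ≤ maxGap X (Set.range p) + δ := by
  have hδ : 0 ≤ δ := dist_nonneg.trans (h (Classical.arbitrary ι))
  refine Real.sSup_le ?_ (add_nonneg (maxGap_nonneg _ _) hδ)
  rintro _ ⟨x, hx, rfl⟩
  have := infDist_le_maxGap_s12 hX (Set.range p) hx
  have := infDist_range_le_add h x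
  linarith

variable [Finite ι]

lemma two_mul_sub_le_dist_of_ne (hp : p.Injective) (h : ∀ i, dist (q i) (p i) ≤ δ) {i j : ι}
    (hij : i ≠ j) : 2 * (minGap (Set.range p) - δ) ≤ dist (q i) (q j) := by
  have := two_mul_minGap_le_dist_s12 (Set.finite_range p) (Set.mem_range_self i)
    (Set.mem_range_self j) (hp.ne hij)
  have := dist_sub_two_mul_le_dist h i j
  linarith

lemma injective_of_dist_le (hp : p.Injective) (hδ : δ < minGap (Set.range p))
    (h : ∀ i, dist (q i) (p i) ≤ δ) : q.Injective := by
  intro i j hq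
  by_contra hij
  have := two_mul_sub_le_dist_of_ne hp h hij
  rw [hq, dist_self] at this
  linarith

lemma sub_le_minGap_range [Nontrivial ι] (hp : p.Injective) (hδ : δ < minGap (Set.range p))
    (h : ∀ i, dist (q i) (p i) ≤ δ) : minGap (Set.range p) - δ ≤ minGap (Set.range q) := by
  have hq := injective_of_dist_le hp hδ h
  refine le_minGap (range_nontrivial_of_injective hq) ?_
  rintro _ ⟨i, rfl⟩ _ ⟨j, rfl⟩ hij
  exact two_mul_sub_le_dist_of_ne hp h fun hij' => hij (congrArg q hij')

lemma gapRatio_range_le [Nontrivial ι] {X : Set E} (hX : X.Finite) (hp : p.Injective)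
    (hδ : δ < minGap (Set.range p)) (h : ∀ i, dist (q i) (p i) ≤ δ) :
    gapRatio X (Set.range q) ≤ (maxGap X (Set.range p) + δ) / (minGap (Set.range p) - δ) :=
  div_le_div₀ (add_nonneg (maxGap_nonneg _ _) (dist_nonneg.trans (h (Classical.arbitrary ι))))
    (maxGap_range_le_add hX h) (sub_pos.mpr hδ) (sub_le_minGap_range hp hδ h)

end Perturbation

lemma rounding_param_mul_lt_one {α ε : ℝ} (hα : α ≤ 2) (hε : 0 ≤ ε) :
    ε / (3 + 2 * ε) * α < 1 := by
  have : ε / (3 + 2 * ε) < 1 / 2 := by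
    rw [div_lt_iff₀ (by positivity)]
    linarith
  nlinarith [div_nonneg hε (show (0 : ℝ) ≤ 3 + 2 * ε by positivity)]

lemma rounding_ratio_le {α ε r : ℝ} (hα0 : 0 ≤ α) (hα2 : α ≤ 2) (hε : 0 ≤ ε) (hr : 0 < r) :
    (α * r + ε / (3 + 2 * ε) * α * r) / (r - ε / (3 + 2 * ε) * α * r) ≤ (1 + ε) * α := by
  set ε₁ := ε / (3 + 2 * ε)
  have hε₁ : ε₁ * (3 + 2 * ε) = ε := div_mul_cancel₀ _ (by positivity)
  have hden : 0 < r - ε₁ * α * r := by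
    nlinarith [rounding_param_mul_lt_one hα2 hε]
  rw [div_le_iff₀ hden]
  have hslack : 0 ≤ α * r * (ε₁ * ((1 + ε) * (2 - α))) := by
    have : 0 ≤ ε₁ := by positivity
    have : 0 ≤ 2 - α := by linarith
    positivity
  linear_combination hslack + α * r * hε₁

theorem stmt12_general (d k : ℕ) (hk : 2 ≤ k)
    (M : Finset (EuclideanSpace ℝ (Fin d)))
    (α : ℝ)
    (hα2 : α ≤ 2)
    (ε : ℝ) (hε : 0 < ε)
    (ε₁ : ℝ) (hε₁ : ε₁ = ε / (3 + 2*ε))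
    (p : Fin k → EuclideanSpace ℝ (Fin d)) (hpinj : Function.Injective p)
    (hopt : gapRatio (↑M) (Set.range p) = α)
    (r : ℝ) (hr : r = minGap (Set.range p))
    (q : Fin k → EuclideanSpace ℝ (Fin d))
    (hclose : ∀ i, dist (q i) (p i) ≤ ε₁ * α * r) :
    Function.Injective q ∧ gapRatio (↑M) (Set.range q) ≤ (1 + ε) * α := by
  have : Nontrivial (Fin k) := Fin.nontrivial_iff_two_le.mpr hk
  have hrpos : 0 < r := hr ▸ minGap_pos (Set.finite_range p) (range_nontrivial_of_injective hpinj)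
  have hR : maxGap (↑M) (Set.range p) = α * r := by
    rw [← hopt, gapRatio, ← hr, div_mul_cancel₀ _ hrpos.ne']
  have hα0 : 0 ≤ α := by
    have := maxGap_nonneg (M : Set (EuclideanSpace ℝ (Fin d))) (Set.range p)
    rw [hR] at this
    exact nonneg_of_mul_nonneg_left this hrpos
  have hδ : ε₁ * α * r < minGap (Set.range p) := by
    rw [← hr, hε₁]
    nlinarith [rounding_param_mul_lt_one hα2 hε.le]
  refine ⟨injective_of_dist_le hpinj hδ hclose, ?_⟩
  calc gapRatio (↑M) (Set.range q)
      ≤ (maxGap (↑M) (Set.range p) + ε₁ * α * r) / (minGap (Set.range p) - ε₁ * α * r) :=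
        gapRatio_range_le M.finite_toSet hpinj hδ hclose
    _ ≤ (1 + ε) * α := by
        rw [hR, ← hr, hε₁]
        exact rounding_ratio_le hα0 hα2 hε.le hrpos

/-- Correctness of the grid-rounding step of the `(1+ε)`-approximation algorithm:
rounding an optimal `k`-point set `P*` to nearby points `q_i` (within `ε₁·α·r`)
yields pairwise distinct points whose gap ratio is at most `(1+ε)·α`. -/
theorem stmt12 (d k : ℕ) (hk : 2 ≤ k)
    (M : Finset (EuclideanSpace ℝ (Fin d))) (hM : k + 1 ≤ M.card)
    (α : ℝ)
    (hα : α = sInf {g : ℝ | ∃ P : Set (EuclideanSpace ℝ (Fin d)),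
        P ⊆ ↑M ∧ P.ncard = k ∧ g = gapRatio (↑M) P})
    (hα2 : α ≤ 2)
    (ε : ℝ) (hε : 0 < ε) (hε' : ε < 1/2)
    (ε₁ : ℝ) (hε₁ : ε₁ = ε / (3 + 2*ε))
    (p : Fin k → EuclideanSpace ℝ (Fin d)) (hpinj : Function.Injective p)
    (hpM : ∀ i, p i ∈ M)
    (hopt : gapRatio (↑M) (Set.range p) = α)
    (r : ℝ) (hr : r = minGap (Set.range p))
    (q : Fin k → EuclideanSpace ℝ (Fin d)) (hqM : ∀ i, q i ∈ M)
    (hclose : ∀ i, dist (q i) (p i) ≤ ε₁ * α * r) :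
    Function.Injective q ∧ gapRatio (↑M) (Set.range q) ≤ (1 + ε) * α :=
  stmt12_general d k hk M α hα2 ε hε ε₁ hε₁ p hpinj hopt r hr q hclose
end
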